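/- arXiv:1804.03077 — 2 statements merged into one kernel-verified Lean document; each statement's English description precedes it below -/
import Mathlib

section
/- (Key inequality from the proof of Theorem 1) For every RDC H, L_{a,b}(H) ≥ a·P[A] + (b − (a+b)·q)·E[H] + (a+b)·E[(q − η)·H_q]. -/
open MeasureTheory Set

/-- A randomized decision classifier (RDC): an `ℋ`-measurable random variable
with values in the unit interval. -/
def IsRDC {Ω : Type*} (ℋ : MeasurableSpace Ω) (H : Ω → ℝ) : Prop :=
  Measurable[ℋ] H ∧ ∀ ω, H ω ∈ Set.Icc (0 : ℝ) 1

/-- The optimal RDC `H_q` obtained by thresholding the posterior probability `η` at `q`,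
with randomization on the event `{η = q}` calibrated so that the predicted positive
rate equals `α`. -/
noncomputable def Hq {Ω : Type*} [MeasurableSpace Ω] (P : Measure Ω) (η : Ω → ℝ)
    (α q : ℝ) : Ω → ℝ := fun ω =>
  if P {ω' | η ω' = q} = 0 then {ω' | η ω' > q}.indicator (fun _ => (1 : ℝ)) ω
  else {ω' | η ω' > q}.indicator (fun _ => (1 : ℝ)) ω +
    ((α - (P {ω' | η ω' > q}).toReal) / (P {ω' | η ω' = q}).toReal) *
      {ω' | η ω' = q}.indicator (fun _ => (1 : ℝ)) ω

/-- Expected misclassification cost `L_{a,b}(H) = a·E[(1−H)·1_A] + b·E[H·1_{Aᶜ}]`. -/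
noncomputable def cost {Ω : Type*} [MeasurableSpace Ω] (P : Measure Ω) (A : Set Ω)
    (a b : ℝ) (H : Ω → ℝ) : ℝ :=
  a * ∫ ω, (1 - H ω) * A.indicator (fun _ => (1 : ℝ)) ω ∂P +
    b * ∫ ω, H ω * Aᶜ.indicator (fun _ => (1 : ℝ)) ω ∂P

/-!
Because `H` is `ℋ`-measurable, `E[1_A H] = E[η H]`, so the cost is affine in `E[H]` and `E[η H]`:
`L(H) = a P[A] + (b - (a+b) q) E[H] + (a+b) E[(q - η) H]`. It remains to compare
`E[(q - η) H_q]` with `E[(q - η) H]`: the randomized part of `H_q` sits on `{η = q}`, where it is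
multiplied by `0`, so `(q - η) H_q = (q - η) 1_{η > q} = min (q - η) 0 ≤ (q - η) H` pointwise.
-/

section

variable {Ω : Type*} [MeasurableSpace Ω]

lemma integral_mul_indicator_one {P : Measure Ω} {s : Set Ω} (hs : MeasurableSet s) (f : Ω → ℝ) :
    ∫ ω, f ω * s.indicator (fun _ => (1 : ℝ)) ω ∂P = ∫ ω in s, f ω ∂P := by
  simp_rw [← indicator_mul_right, mul_one]
  exact integral_indicator hs

lemma cost_eq {P : Measure Ω} [IsFiniteMeasure P] {A : Set Ω} (hA : MeasurableSet A) (a b : ℝ)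
    {H : Ω → ℝ} (hH : Integrable H P) :
    cost P A a b H = a * P.real A + b * ∫ ω, H ω ∂P - (a + b) * ∫ ω in A, H ω ∂P := by
  have hfalseNeg : ∫ ω, (1 - H ω) * A.indicator (fun _ => (1 : ℝ)) ω ∂P
      = P.real A - ∫ ω in A, H ω ∂P := by
    rw [integral_mul_indicator_one hA,
      integral_sub (integrable_const 1).integrableOn hH.integrableOn, setIntegral_const,
      smul_eq_mul, mul_one]
  have hfalsePos : ∫ ω, H ω * Aᶜ.indicator (fun _ => (1 : ℝ)) ω ∂P
      = ∫ ω, H ω ∂P - ∫ ω in A, H ω ∂P := by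
    rw [integral_mul_indicator_one hA.compl, setIntegral_compl hA hH]
  rw [cost, hfalseNeg, hfalsePos]
  ring

lemma Hq_of_lt (P : Measure Ω) {η : Ω → ℝ} (α : ℝ) {q : ℝ} {ω : Ω}
    (h : η ω < q) : Hq P η α q ω = 0 := by
  simp [Hq, h.not_gt, h.ne]

lemma Hq_of_gt (P : Measure Ω) {η : Ω → ℝ} (α : ℝ) {q : ℝ} {ω : Ω}
    (h : q < η ω) : Hq P η α q ω = 1 := by
  simp [Hq, h, h.ne']

lemma sub_mul_Hq_eq_indicator (P : Measure Ω) (η : Ω → ℝ) (α q : ℝ) :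
    (fun ω => (q - η ω) * Hq P η α q ω) = {ω | q < η ω}.indicator (fun ω => q - η ω) := by
  funext ω
  rcases lt_trichotomy (η ω) q with h | h | h
  · simp [Hq_of_lt P α h, h.not_gt]
  · simp [h]
  · simp [Hq_of_gt P α h, h]

lemma integral_sub_mul_Hq_le (P : Measure Ω) [IsFiniteMeasure P]
    {η : Ω → ℝ} (hηm : Measurable η) (hη : Integrable η P) (α q : ℝ) {H : Ω → ℝ}
    (hHm : AEStronglyMeasurable H P) (hH01 : ∀ ω, H ω ∈ Icc (0 : ℝ) 1) :
    ∫ ω, (q - η ω) * Hq P η α q ω ∂P ≤ ∫ ω, (q - η ω) * H ω ∂P := by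
  have hqη : Integrable (fun ω => q - η ω) P := (integrable_const q).sub hη
  have hqηH : Integrable (fun ω => (q - η ω) * H ω) P :=
    hqη.mul_bdd hHm (c := 1) (ae_of_all _ fun ω => (abs_of_nonneg (hH01 ω).1).trans_le (hH01 ω).2)
  have hpt : ∀ ω, {ω | q < η ω}.indicator (fun ω => q - η ω) ω ≤ (q - η ω) * H ω := by
    intro ω
    simp only [indicator_apply, mem_ofPred_eq]
    split_ifs with hω
    · nlinarith [(hH01 ω).2]
    · nlinarith [(hH01 ω).1]
  rw [sub_mul_Hq_eq_indicator]
  exact integral_mono (hqη.indicator (hηm measurableSet_Ioi)) hqηH hpt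

end

theorem cost_key_inequality_general
    {Ω : Type*} (ℋ : MeasurableSpace Ω) [𝒜 : MeasurableSpace Ω]
    (P : Measure Ω) [IsProbabilityMeasure P] (hℋ : ℋ ≤ 𝒜)
    (A : Set Ω) (hA : MeasurableSet A)
    (η : Ω → ℝ) (hηm : Measurable[ℋ] η) (hη01 : ∀ ω, η ω ∈ Set.Icc (0 : ℝ) 1)
    (hηcond : ∀ Z : Ω → ℝ, Measurable[ℋ] Z → (∃ C, ∀ ω, |Z ω| ≤ C) →
      ∫ ω, η ω * Z ω ∂P = ∫ ω, A.indicator (fun _ => (1 : ℝ)) ω * Z ω ∂P)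
    (α : ℝ)
    (q : ℝ)
    (a b : ℝ) (hab : 0 < a + b)
 :
    ∀ H : Ω → ℝ, IsRDC ℋ H →
      a * (P A).toReal + (b - (a + b) * q) * ∫ ω, H ω ∂P
          + (a + b) * ∫ ω, (q - η ω) * Hq P η α q ω ∂P
        ≤ cost P A a b H := by
  rintro H ⟨hHm, hH01⟩
  have hHM : Measurable H := hHm.mono hℋ le_rfl
  have hηM : Measurable η := hηm.mono hℋ le_rfl
  have hHbdd : ∀ ω, |H ω| ≤ 1 := fun ω => (abs_of_nonneg (hH01 ω).1).trans_le (hH01 ω).2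
  have hηbdd : ∀ ω, |η ω| ≤ 1 := fun ω => (abs_of_nonneg (hη01 ω).1).trans_le (hη01 ω).2
  have hHint : Integrable H P := .of_bound hHM.aestronglyMeasurable 1 (ae_of_all _ hHbdd)
  have hηint : Integrable η P := .of_bound hηM.aestronglyMeasurable 1 (ae_of_all _ hηbdd)
  have hcond : ∫ ω in A, H ω ∂P = ∫ ω, η ω * H ω ∂P := by
    rw [hηcond H hHm ⟨1, hHbdd⟩, ← integral_mul_indicator_one hA]
    simp_rw [mul_comm]
  have hsplit : ∫ ω, (q - η ω) * H ω ∂P = q * ∫ ω, H ω ∂P - ∫ ω, η ω * H ω ∂P := by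
    simp_rw [sub_mul]
    rw [integral_sub (hHint.const_mul q) (hHint.bdd_mul hηM.aestronglyMeasurable
      (ae_of_all _ hηbdd)), integral_const_mul]
  have hHq := integral_sub_mul_Hq_le P hηM hηint α q hHM.aestronglyMeasurable hH01
  rw [hsplit] at hHq
  rw [cost_eq hA a b hHint, hcond, ← measureReal_def]
  linarith [mul_le_mul_of_nonneg_left hHq hab.le]

/-- key inequality from the proof of Theorem 1. For every RDC `H`,
`L_{a,b}(H) ≥ a·P[A] + (b − (a+b)q)·E[H] + (a+b)·E[(q − η)·H_q]`. -/
theorem cost_key_inequality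
    {Ω : Type*} (ℋ : MeasurableSpace Ω) [𝒜 : MeasurableSpace Ω]
    (P : Measure Ω) [IsProbabilityMeasure P] (hℋ : ℋ ≤ 𝒜)
    (A : Set Ω) (hA : MeasurableSet A) (hA0 : 0 < P A) (hA1 : P A < 1)
    (hAH : ¬ MeasurableSet[ℋ] A)
    (η : Ω → ℝ) (hηm : Measurable[ℋ] η) (hη01 : ∀ ω, η ω ∈ Set.Icc (0 : ℝ) 1)
    (hηcond : ∀ Z : Ω → ℝ, Measurable[ℋ] Z → (∃ C, ∀ ω, |Z ω| ≤ C) →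
      ∫ ω, η ω * Z ω ∂P = ∫ ω, A.indicator (fun _ => (1 : ℝ)) ω * Z ω ∂P)
    (α : ℝ) (hα : α ∈ Set.Ioo (0 : ℝ) 1)
    (q : ℝ) (hq₁ : (P {ω | η ω < q}).toReal ≤ 1 - α)
    (hq₂ : 1 - α ≤ (P {ω | η ω ≤ q}).toReal)
    (a b : ℝ) (ha : 0 ≤ a) (hb : 0 ≤ b) (hab : 0 < a + b)
 :
    ∀ H : Ω → ℝ, IsRDC ℋ H →
      a * (P A).toReal + (b - (a + b) * q) * ∫ ω, H ω ∂P
          + (a + b) * ∫ ω, (q - η ω) * Hq P η α q ω ∂P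
        ≤ cost P A a b H :=
  cost_key_inequality_general ℋ (𝒜 := 𝒜) P hℋ A hA η hηm hη01 hηcond α q a b hab
end

section
/- (Precision at the top) The RDC H_q maximizes precision among all RDCs with predicted positive rate exactly α: for every RDC H with E[H] = α, precision(H) ≤ precision(H_q), where precision(H) = E[H·1_A]/E[H]. -/
open MeasureTheory Set

/-!
This is the Neyman–Pearson argument. For every `[0,1]`-valued `H`, the differences `H_q − H` and
`η − q` have the same sign pointwise, so `E[(H_q − H)(η − q)] ≥ 0`. Both classifiers have mean `α`,
hence `E[H η] ≤ E[H_q η]`, and since `η = P[A|ℋ]` while `H` and `H_q` are `ℋ`-measurable, the two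
sides are `E[H 1_A]` and `E[H_q 1_A]`.
-/

lemma integral_mul_le_of_sub_mul_sub_nonneg {Ω : Type*} [MeasurableSpace Ω] {μ : Measure Ω}
    {f g h : Ω → ℝ} (q : ℝ) (hg : Integrable g μ) (hh : Integrable h μ)
    (hgf : Integrable (fun ω => g ω * f ω) μ) (hhf : Integrable (fun ω => h ω * f ω) μ)
    (hgh : ∫ ω, h ω ∂μ = ∫ ω, g ω ∂μ) (hpos : ∀ ω, 0 ≤ (g ω - h ω) * (f ω - q)) :
    ∫ ω, h ω * f ω ∂μ ≤ ∫ ω, g ω * f ω ∂μ := by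
  have hexpand : ∫ ω, (g ω - h ω) * (f ω - q) ∂μ
      = (∫ ω, g ω * f ω ∂μ - ∫ ω, h ω * f ω ∂μ) - q * (∫ ω, g ω ∂μ - ∫ ω, h ω ∂μ) := by
    simp_rw [show ∀ ω, (g ω - h ω) * (f ω - q) = (g ω * f ω - h ω * f ω) - q * (g ω - h ω)
      from fun ω => by ring]
    have hgf_hf : Integrable (fun ω => g ω * f ω - h ω * f ω) μ := hgf.sub hhf
    have hqgh : Integrable (fun ω => q * (g ω - h ω)) μ := (hg.sub hh).const_mul q
    rw [integral_sub hgf_hf hqgh, integral_sub hgf hhf, integral_const_mul, integral_sub hg hh]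
  have : 0 ≤ ∫ ω, (g ω - h ω) * (f ω - q) ∂μ := integral_nonneg hpos
  rw [hexpand, hgh, sub_self, mul_zero, sub_zero] at this
  linarith

section Hq

variable {Ω : Type*} (ℋ : MeasurableSpace Ω) [MeasurableSpace Ω] (P : Measure Ω) (η : Ω → ℝ)
  (α q : ℝ)

lemma Hq_eq_one_of_gt {ω : Ω} (h : q < η ω) : Hq P η α q ω = 1 := by
  simp [Hq, h, h.ne']

lemma Hq_eq_zero_of_lt {ω : Ω} (h : η ω < q) : Hq P η α q ω = 0 := by
  simp [Hq, h.not_gt, h.ne]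

lemma abs_Hq_le (ω : Ω) :
    |Hq P η α q ω| ≤ 1 + |(α - P.real {ω' | η ω' > q}) / P.real {ω' | η ω' = q}| := by
  have hc := abs_nonneg ((α - P.real {ω' | η ω' > q}) / P.real {ω' | η ω' = q})
  rcases lt_trichotomy (η ω) q with h | h | h
  · rw [Hq_eq_zero_of_lt P η α q h, abs_zero]; linarith
  · have hgt0 : {ω' | η ω' > q}.indicator (fun _ => (1 : ℝ)) ω = 0 :=
      indicator_of_notMem (by simp [h]) _
    have heq1 : {ω' | η ω' = q}.indicator (fun _ => (1 : ℝ)) ω = 1 :=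
      indicator_of_mem (show ω ∈ {ω' | η ω' = q} from h) _
    simp only [Hq, hgt0, heq1, ← measureReal_def]
    split_ifs <;> simp only [abs_zero, zero_add, mul_one] <;> linarith
  · rw [Hq_eq_one_of_gt P η α q h, abs_one]; linarith

lemma Hq_sub_mul_sub_nonneg {x : ℝ} (hx : x ∈ Icc 0 1) (ω : Ω) :
    0 ≤ (Hq P η α q ω - x) * (η ω - q) := by
  rcases lt_trichotomy (η ω) q with h | h | h
  · rw [Hq_eq_zero_of_lt P η α q h]; nlinarith [hx.1]
  · simp [h]
  · rw [Hq_eq_one_of_gt P η α q h]; nlinarith [hx.2]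

lemma measurable_Hq (hη : Measurable[ℋ] η) :
    Measurable[ℋ] (Hq P η α q) := by
  have hgt : MeasurableSet[ℋ] {ω | η ω > q} := hη measurableSet_Ioi
  have heq : MeasurableSet[ℋ] {ω | η ω = q} := hη (measurableSet_singleton q)
  have hgt1 : Measurable[ℋ] ({ω | η ω > q}.indicator fun _ => (1 : ℝ)) :=
    measurable_const.indicator hgt
  unfold Hq
  exact Measurable.ite (MeasurableSet.const _) hgt1
    (hgt1.add ((measurable_const.indicator heq).const_mul _))

lemma integral_Hq [IsProbabilityMeasure P] (hη : Measurable η)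
    (hq₁ : P.real {ω | η ω < q} ≤ 1 - α) (hq₂ : 1 - α ≤ P.real {ω | η ω ≤ q}) :
    ∫ ω, Hq P η α q ω ∂P = α := by
  have hgt : MeasurableSet {ω | η ω > q} := measurableSet_lt measurable_const hη
  have heq : MeasurableSet {ω | η ω = q} := hη (measurableSet_singleton q)
  by_cases h0 : P {ω | η ω = q} = 0
  · have he : P.real {ω | η ω = q} = 0 := by simp [measureReal_def, h0]
    have hle : P.real {ω | η ω ≤ q} = P.real {ω | η ω < q} + P.real {ω | η ω = q} := by
      rw [← measureReal_union _ heq]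
      · congr 1; ext ω; simp [le_iff_lt_or_eq]
      · exact Set.disjoint_left.2 fun ω h1 h2 => (ne_of_lt h1) h2
    have hcompl : P.real {ω | η ω > q} = 1 - P.real {ω | η ω ≤ q} := by
      rw [← probReal_compl_eq_one_sub (measurableSet_le hη measurable_const)]
      congr 1; ext ω; simp
    simp only [Hq, h0, if_true]
    rw [← Pi.one_def, integral_indicator_one hgt]
    linarith
  · have he : P.real {ω | η ω = q} ≠ 0 := by
      simpa [measureReal_def, ENNReal.toReal_eq_zero_iff] using h0
    simp only [Hq, h0, if_false]
    have hgt1 : Integrable ({ω | η ω > q}.indicator fun _ => (1 : ℝ)) P :=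
      (integrable_const 1).indicator hgt
    have heq1 : Integrable ({ω | η ω = q}.indicator fun _ => (1 : ℝ)) P :=
      (integrable_const 1).indicator heq
    rw [integral_add hgt1 (heq1.const_mul _), integral_const_mul, ← Pi.one_def,
      integral_indicator_one hgt, integral_indicator_one heq]
    simp only [← measureReal_def]
    field_simp
    ring

end Hq

theorem Hq_max_precision_general
    {Ω : Type*} (ℋ : MeasurableSpace Ω) [𝒜 : MeasurableSpace Ω]
    (P : Measure Ω) [IsProbabilityMeasure P] (hℋ : ℋ ≤ 𝒜)
    (A : Set Ω)
    (η : Ω → ℝ) (hηm : Measurable[ℋ] η) (hη01 : ∀ ω, η ω ∈ Set.Icc (0 : ℝ) 1)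
    (hηcond : ∀ Z : Ω → ℝ, Measurable[ℋ] Z → (∃ C, ∀ ω, |Z ω| ≤ C) →
      ∫ ω, η ω * Z ω ∂P = ∫ ω, A.indicator (fun _ => (1 : ℝ)) ω * Z ω ∂P)
    (α : ℝ) (hα : α ∈ Set.Ioo (0 : ℝ) 1)
    (q : ℝ) (hq₁ : (P {ω | η ω < q}).toReal ≤ 1 - α)
    (hq₂ : 1 - α ≤ (P {ω | η ω ≤ q}).toReal)
 :
    ∀ H : Ω → ℝ, IsRDC ℋ H → ∫ ω, H ω ∂P = α →
      (∫ ω, H ω * A.indicator (fun _ => (1 : ℝ)) ω ∂P) / (∫ ω, H ω ∂P)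
        ≤ (∫ ω, Hq P η α q ω * A.indicator (fun _ => (1 : ℝ)) ω ∂P)
            / (∫ ω, Hq P η α q ω ∂P) := by
  rintro H ⟨hHm, hH01⟩ hHα
  set G := Hq P η α q
  have hGm : Measurable[ℋ] G := measurable_Hq ℋ P η α q hηm
  have hGα : ∫ ω, G ω ∂P = α := integral_Hq P η α q (hηm.mono hℋ le_rfl) hq₁ hq₂
  have hHbd : ∀ ω, |H ω| ≤ 1 := fun ω => abs_le.2 ⟨by linarith [(hH01 ω).1], (hH01 ω).2⟩
  have hηbd : ∀ᵐ ω ∂P, ‖η ω‖ ≤ 1 :=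
    ae_of_all _ fun ω => abs_le.2 ⟨by linarith [(hη01 ω).1], (hη01 ω).2⟩
  have hη : AEStronglyMeasurable η P := (hηm.mono hℋ le_rfl).aestronglyMeasurable
  have intH : Integrable H P :=
    .of_bound (hHm.mono hℋ le_rfl).aestronglyMeasurable 1 (ae_of_all _ hHbd)
  have intG : Integrable G P :=
    .of_bound (hGm.mono hℋ le_rfl).aestronglyMeasurable _ (ae_of_all _ (abs_Hq_le P η α q))
  have hmean : ∫ ω, H ω * η ω ∂P ≤ ∫ ω, G ω * η ω ∂P :=
    integral_mul_le_of_sub_mul_sub_nonneg q intG intH (intG.mul_bdd hη hηbd)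
      (intH.mul_bdd hη hηbd) (hHα.trans hGα.symm) fun ω => Hq_sub_mul_sub_nonneg P η α q (hH01 ω) ω
  have hcond : ∀ Z : Ω → ℝ, Measurable[ℋ] Z → (∃ C, ∀ ω, |Z ω| ≤ C) →
      ∫ ω, Z ω * A.indicator (fun _ => (1 : ℝ)) ω ∂P = ∫ ω, Z ω * η ω ∂P := by
    intro Z hZ hZC
    simp_rw [mul_comm (Z _)]
    exact (hηcond Z hZ hZC).symm
  rw [hcond H hHm ⟨1, hHbd⟩, hcond G hGm ⟨_, abs_Hq_le P η α q⟩, hHα, hGα]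
  exact div_le_div_of_nonneg_right hmean hα.1.le

/-- precision at the top. `H_q` maximizes precision
`E[H·1_A]/E[H]` among all RDCs with predicted positive rate exactly `α`. -/
theorem Hq_max_precision
    {Ω : Type*} (ℋ : MeasurableSpace Ω) [𝒜 : MeasurableSpace Ω]
    (P : Measure Ω) [IsProbabilityMeasure P] (hℋ : ℋ ≤ 𝒜)
    (A : Set Ω) (hA : MeasurableSet A) (hA0 : 0 < P A) (hA1 : P A < 1)
    (hAH : ¬ MeasurableSet[ℋ] A)
    (η : Ω → ℝ) (hηm : Measurable[ℋ] η) (hη01 : ∀ ω, η ω ∈ Set.Icc (0 : ℝ) 1)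
    (hηcond : ∀ Z : Ω → ℝ, Measurable[ℋ] Z → (∃ C, ∀ ω, |Z ω| ≤ C) →
      ∫ ω, η ω * Z ω ∂P = ∫ ω, A.indicator (fun _ => (1 : ℝ)) ω * Z ω ∂P)
    (α : ℝ) (hα : α ∈ Set.Ioo (0 : ℝ) 1)
    (q : ℝ) (hq₁ : (P {ω | η ω < q}).toReal ≤ 1 - α)
    (hq₂ : 1 - α ≤ (P {ω | η ω ≤ q}).toReal)
 :
    ∀ H : Ω → ℝ, IsRDC ℋ H → ∫ ω, H ω ∂P = α →
      (∫ ω, H ω * A.indicator (fun _ => (1 : ℝ)) ω ∂P) / (∫ ω, H ω ∂P)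
        ≤ (∫ ω, Hq P η α q ω * A.indicator (fun _ => (1 : ℝ)) ω ∂P)
            / (∫ ω, Hq P η α q ω ∂P) :=
  Hq_max_precision_general ℋ (𝒜 := 𝒜) P hℋ A η hηm hη01 hηcond α hα q hq₁ hq₂
end
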